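/- arXiv:2604.14937 — 2 statements merged into one kernel-verified Lean document; each statement's English description precedes it below -/
import Mathlib

section
/- There exists a unique ℂ-linear map S : 𝒜 → 𝒜 such that S(1) = 1, S(α) = α*, S(α*) = α, S(γ) = −conj(q)·γ, S(γ*) = −q⁻¹·γ*, S maps 𝒜_p into 𝒜_p for every p ∈ ℤ, and S(ab) = ζ^{−pr}·S(b)S(a) whenever a ∈ 𝒜_p and b ∈ 𝒜_r (p, r ∈ ℤ). -/
open scoped TensorProduct

noncomputable section

/-- The monomial family `α^n γ^m (γ*)^k` (for `n ≥ 0`) resp. `(α*)^{-n} γ^m (γ*)^k`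
(for `n < 0`), indexed by `(n, m, k) ∈ ℤ × ℕ × ℕ`. -/
def suqMono {A : Type*} [Ring A] [StarRing A] (a g : A) (i : ℤ × ℕ × ℕ) : A :=
  (if 0 ≤ i.1 then a ^ i.1.toNat else (star a) ^ (-i.1).toNat) * g ^ i.2.1 * (star g) ^ i.2.2

/-- The degree-`p` homogeneous component `𝒜_p`: the `ℂ`-span of the basis monomials with
`m - k = p`. -/
def suqHomog {A : Type*} [Ring A] [Algebra ℂ A] [StarRing A] (a g : A) (p : ℤ) :
    Submodule ℂ A :=
  Submodule.span ℂ
    {x | ∃ i : ℤ × ℕ × ℕ, (i.2.1 : ℤ) - (i.2.2 : ℤ) = p ∧ x = suqMono a g i}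

/-- The defining relations of `Pol(SU_q(2))`. -/
def SUqRel {A : Type*} [Ring A] [Algebra ℂ A] [StarRing A] (q : ℂ) (a g : A) : Prop :=
  star a * a + star g * g = 1 ∧
  a * star a + ((‖q‖ : ℂ) ^ 2) • (star g * g) = 1 ∧
  g * star g = star g * g ∧
  a * g = (starRingEnd ℂ q) • (g * a) ∧
  a * star g = q • (star g * a)

/-- The monomials form a `ℂ`-basis. -/
def SUqBasis {A : Type*} [Ring A] [Algebra ℂ A] [StarRing A] (a g : A) : Prop :=
  LinearIndependent ℂ (suqMono a g) ∧
  Submodule.span ℂ (Set.range (suqMono a g)) = ⊤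

/-- The characterizing properties of the antipode `S`. -/
def SUqAntipode {A : Type*} [Ring A] [Algebra ℂ A] [StarRing A] (q : ℂ) (a g : A)
    (S : A →ₗ[ℂ] A) : Prop :=
  S 1 = 1 ∧ S a = star a ∧ S (star a) = a ∧
  S g = (-(starRingEnd ℂ q)) • g ∧ S (star g) = (-q⁻¹) • star g ∧
  (∀ p : ℤ, ∀ x ∈ suqHomog a g p, S x ∈ suqHomog a g p) ∧
  (∀ p r : ℤ, ∀ x ∈ suqHomog a g p, ∀ y ∈ suqHomog a g r,
    S (x * y) = ((q / starRingEnd ℂ q) ^ (-(p * r))) • (S y * S x))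

/-- The braided multiplication on `𝒜 ⊗ 𝒜`. -/
def SUqBraidedMul {A : Type*} [Ring A] [Algebra ℂ A] [StarRing A] (q : ℂ) (a g : A)
    (μ : A ⊗[ℂ] A →ₗ[ℂ] A ⊗[ℂ] A →ₗ[ℂ] A ⊗[ℂ] A) : Prop :=
  ∀ (x w : A) (r s : ℤ), ∀ y ∈ suqHomog a g r, ∀ z ∈ suqHomog a g s,
    μ (x ⊗ₜ[ℂ] y) (z ⊗ₜ[ℂ] w)
      = ((q / starRingEnd ℂ q) ^ (-(r * s))) • ((x * z) ⊗ₜ[ℂ] (y * w))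

/-- The characterizing properties of the comultiplication `Δ` (as a unital algebra
homomorphism into the braided tensor square with multiplication `μ`). -/
def SUqComul {A : Type*} [Ring A] [Algebra ℂ A] [StarRing A] (q : ℂ) (a g : A)
    (μ : A ⊗[ℂ] A →ₗ[ℂ] A ⊗[ℂ] A →ₗ[ℂ] A ⊗[ℂ] A) (Δ : A →ₗ[ℂ] A ⊗[ℂ] A) : Prop :=
  Δ 1 = 1 ⊗ₜ[ℂ] 1 ∧ (∀ x y : A, Δ (x * y) = μ (Δ x) (Δ y)) ∧
  Δ a = a ⊗ₜ[ℂ] a - q • ((star g) ⊗ₜ[ℂ] g) ∧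
  Δ g = g ⊗ₜ[ℂ] a + (star a) ⊗ₜ[ℂ] g ∧
  Δ (star a) = (star a) ⊗ₜ[ℂ] (star a) - q • (g ⊗ₜ[ℂ] (star g)) ∧
  Δ (star g) = (star g) ⊗ₜ[ℂ] (star a) + a ⊗ₜ[ℂ] (star g)

/-- The braided flip `c` on `𝒜 ⊗ 𝒜`. -/
def SUqFlip {A : Type*} [Ring A] [Algebra ℂ A] [StarRing A] (q : ℂ) (a g : A)
    (c : A ⊗[ℂ] A →ₗ[ℂ] A ⊗[ℂ] A) : Prop :=
  ∀ (p r : ℤ), ∀ x ∈ suqHomog a g p, ∀ y ∈ suqHomog a g r,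
    c (x ⊗ₜ[ℂ] y) = ((q / starRingEnd ℂ q) ^ (-(p * r))) • (y ⊗ₜ[ℂ] x)

/-- The Haar functional, defined on the basis. -/
def SUqHaar {A : Type*} [Ring A] [Algebra ℂ A] [StarRing A] (q : ℂ) (a g : A)
    (h : A →ₗ[ℂ] ℂ) : Prop :=
  ∀ i : ℤ × ℕ × ℕ, h (suqMono a g i) =
    if i.1 = 0 ∧ i.2.1 = i.2.2
    then (1 - (‖q‖ : ℂ) ^ 2) / (1 - (‖q‖ : ℂ) ^ (2 * (i.2.1 + 1)))
    else 0

/-!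
The product rule forces `S(αⁿγᵐγ*ᵏ) = c(n,m,k) · α^(-n)γᵐγ*ᵏ`, where `α^(-n)` means `α*ⁿ`, for an
explicit scalar `c`; so `S` is defined on the basis by this formula, and uniqueness is automatic
once the product rule holds. The rule is linear in the left factor and stable under products of
right factors (the exponents `-pr` add up), so it suffices to check it for a basis monomial times
one of `α, α*, γ, γ*`. That is a direct computation with the commutation relations; the only
non-monomial terms come from `α*α = 1 - γ*γ` and `αα* = 1 - |q|²γ*γ`.
-/

open ComplexConjugate

section ScaledCommute

variable {R A : Type*} [CommSemiring R] [Semiring A] [Algebra R A]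

def ScaledCommute (c : R) (x y : A) : Prop := x * y = c • (y * x)

namespace ScaledCommute

variable {c d : R} {x y z : A}

theorem mul_left (h : ScaledCommute c x z) (h' : ScaledCommute d y z) :
    ScaledCommute (c * d) (x * y) z := by
  rw [ScaledCommute, mul_assoc, h', mul_smul_comm, ← mul_assoc, h, smul_mul_assoc, smul_smul,
    mul_assoc, mul_comm c]

theorem pow_left (h : ScaledCommute c x y) : ∀ n : ℕ, ScaledCommute (c ^ n) (x ^ n) y
  | 0 => by simp [ScaledCommute]
  | n + 1 => by simpa only [pow_succ] using (h.pow_left n).mul_left h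

theorem pow_right (h : ScaledCommute c x y) : ∀ n : ℕ, ScaledCommute (c ^ n) x (y ^ n)
  | 0 => by simp [ScaledCommute]
  | n + 1 => by
    rw [ScaledCommute, pow_succ, ← mul_assoc, h.pow_right n, smul_mul_assoc, mul_assoc, h,
      mul_smul_comm, smul_smul, ← mul_assoc, ← pow_succ, pow_succ]

theorem star_star [StarRing R] [StarRing A] [StarModule R A] (h : ScaledCommute c x y) :
    ScaledCommute (star c) (star y) (star x) := by
  rw [ScaledCommute, ← star_mul, h, star_smul, star_mul]

theorem symm {k : Type*} [Field k] [Algebra k A] {c : k} (hc : c ≠ 0)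
    (h : ScaledCommute c x y) : ScaledCommute c⁻¹ y x := by
  rw [ScaledCommute, h, smul_smul, inv_mul_cancel₀ hc, one_smul]

end ScaledCommute

end ScaledCommute

def signedPow {A : Type*} [Monoid A] [Star A] (a : A) (n : ℤ) : A :=
  if 0 ≤ n then a ^ n.toNat else star a ^ (-n).toNat

section signedPow

variable {A : Type*} [Monoid A] [Star A] (a : A)

@[simp] theorem signedPow_natCast (t : ℕ) : signedPow a t = a ^ t := by
  simp [signedPow]

@[simp] theorem signedPow_neg_natCast (t : ℕ) : signedPow a (-t) = star a ^ t := by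
  simp only [signedPow, Left.nonneg_neg_iff, Nat.cast_nonpos, neg_neg, Int.toNat_natCast]
  split_ifs with h <;> simp [h]

variable {n : ℤ}

theorem signedPow_add_one (hn : 0 ≤ n) : signedPow a (n + 1) = signedPow a n * a := by
  lift n to ℕ using hn
  exact_mod_cast pow_succ a n

theorem signedPow_add_one' (hn : 0 ≤ n) : signedPow a (n + 1) = a * signedPow a n := by
  lift n to ℕ using hn
  exact_mod_cast pow_succ' a n

theorem signedPow_sub_one (hn : n ≤ 0) : signedPow a (n - 1) = signedPow a n * star a := by
  obtain ⟨t, rfl⟩ := Int.exists_eq_neg_ofNat hn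
  rw [← neg_add', ← Nat.cast_one, ← Nat.cast_add, signedPow_neg_natCast, signedPow_neg_natCast,
    pow_succ]

theorem signedPow_sub_one' (hn : n ≤ 0) : signedPow a (n - 1) = star a * signedPow a n := by
  obtain ⟨t, rfl⟩ := Int.exists_eq_neg_ofNat hn
  rw [← neg_add', ← Nat.cast_one, ← Nat.cast_add, signedPow_neg_natCast, signedPow_neg_natCast,
    pow_succ']

end signedPow

theorem ScaledCommute.mul_signedPow {k A : Type*} [Field k] [Semiring A] [Star A] [Algebra k A]
    {c : k} {x a : A} (h : ScaledCommute c x a) (h' : ScaledCommute c⁻¹ x (star a)) (n : ℤ) :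
    x * signedPow a n = c ^ n • (signedPow a n * x) := by
  obtain ⟨t, rfl | rfl⟩ := n.eq_nat_or_neg
  · simpa [ScaledCommute] using h.pow_right t
  · simpa [ScaledCommute, inv_pow] using h'.pow_right t

section BraidedAntiMul

variable {k A : Type*} [Field k] [Ring A] [Algebra k A]

/-- Membership of `x * y` is carried along because the product rule for a right factor `y * z`
is applied to the left factor `x * y`. -/
def BraidedAntiMulAt (V : ℤ → Submodule k A) (ζ : k) (S : A →ₗ[k] A) (r : ℤ) (y : A) : Prop :=
  y ∈ V r ∧ ∀ p, ∀ x ∈ V p, x * y ∈ V (p + r) ∧ S (x * y) = ζ ^ (-(p * r)) • (S y * S x)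

namespace BraidedAntiMulAt

variable {V : ℤ → Submodule k A} {ζ : k} {S : A →ₗ[k] A} {r s : ℤ} {y z : A}

theorem zero (r : ℤ) : BraidedAntiMulAt V ζ S r 0 :=
  ⟨zero_mem _, fun p x _ => by simp⟩

theorem add (hy : BraidedAntiMulAt V ζ S r y) (hz : BraidedAntiMulAt V ζ S r z) :
    BraidedAntiMulAt V ζ S r (y + z) := by
  refine ⟨add_mem hy.1 hz.1, fun p x hx => ⟨?_, ?_⟩⟩
  · rw [mul_add]; exact add_mem (hy.2 p x hx).1 (hz.2 p x hx).1
  · rw [mul_add, map_add, (hy.2 p x hx).2, (hz.2 p x hx).2, map_add, add_mul, smul_add]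

theorem smul (c : k) (hy : BraidedAntiMulAt V ζ S r y) : BraidedAntiMulAt V ζ S r (c • y) := by
  refine ⟨Submodule.smul_mem _ c hy.1, fun p x hx => ⟨?_, ?_⟩⟩
  · rw [mul_smul_comm]; exact Submodule.smul_mem _ c (hy.2 p x hx).1
  · rw [mul_smul_comm, map_smul, (hy.2 p x hx).2, map_smul, smul_mul_assoc, smul_comm]

theorem one (h1 : (1 : A) ∈ V 0) (hS : S 1 = 1) : BraidedAntiMulAt V ζ S 0 1 :=
  ⟨h1, fun p x hx => by simpa [hS] using hx⟩

theorem mul (hζ : ζ ≠ 0) (hy : BraidedAntiMulAt V ζ S r y) (hz : BraidedAntiMulAt V ζ S s z) :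
    BraidedAntiMulAt V ζ S (r + s) (y * z) := by
  refine ⟨(hz.2 r y hy.1).1, fun p x hx => ⟨?_, ?_⟩⟩
  · rw [← mul_assoc, ← add_assoc]; exact (hz.2 _ _ (hy.2 p x hx).1).1
  · rw [← mul_assoc, (hz.2 _ _ (hy.2 p x hx).1).2, (hy.2 p x hx).2, (hz.2 r y hy.1).2,
      mul_smul_comm, smul_mul_assoc, smul_smul, smul_smul, mul_assoc, ← zpow_add₀ hζ,
      ← zpow_add₀ hζ]
    congr 2
    ring

theorem of_span {gen : ℤ → Set A} (hV : ∀ p, V p = Submodule.span k (gen p)) (hy : y ∈ V r)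
    (h : ∀ p, ∀ x ∈ gen p, x * y ∈ V (p + r) ∧ S (x * y) = ζ ^ (-(p * r)) • (S y * S x)) :
    BraidedAntiMulAt V ζ S r y := by
  refine ⟨hy, fun p x hx => ?_⟩
  rw [hV] at hx
  induction hx using Submodule.span_induction with
  | mem x hx => exact h p x hx
  | zero => simp
  | add x x' _ _ hx hx' =>
    refine ⟨by rw [add_mul]; exact add_mem hx.1 hx'.1, ?_⟩
    rw [add_mul, map_add, hx.2, hx'.2, map_add, mul_add, smul_add]
  | smul c x _ hx =>
    refine ⟨by rw [smul_mul_assoc]; exact Submodule.smul_mem _ c hx.1, ?_⟩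
    rw [smul_mul_assoc, map_smul, hx.2, map_smul, mul_smul_comm, smul_comm]

end BraidedAntiMulAt

end BraidedAntiMul

namespace SUqRel

variable {A : Type*} [Ring A] [Algebra ℂ A] [StarRing A] {q : ℂ} {a g : A}

theorem star_a_mul_a (h : SUqRel q a g) : star a * a = 1 - star g * g :=
  eq_sub_of_add_eq h.1

theorem a_mul_star_a (h : SUqRel q a g) : a * star a = 1 - (q * conj q) • (star g * g) := by
  rw [Complex.mul_conj']; exact eq_sub_of_add_eq h.2.1

theorem commute_g_star_g (h : SUqRel q a g) : Commute g (star g) := h.2.2.1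

theorem scaledCommute_g_a (h : SUqRel q a g) (hq : q ≠ 0) : ScaledCommute (conj q)⁻¹ g a :=
  ScaledCommute.symm (by simpa using hq) h.2.2.2.1

theorem scaledCommute_star_g_a (h : SUqRel q a g) (hq : q ≠ 0) :
    ScaledCommute q⁻¹ (star g) a :=
  ScaledCommute.symm hq h.2.2.2.2

variable [StarModule ℂ A]

theorem scaledCommute_g_star_a (h : SUqRel q a g) : ScaledCommute (conj q) g (star a) := by
  simpa using ScaledCommute.star_star h.2.2.2.2

theorem scaledCommute_star_g_star_a (h : SUqRel q a g) :
    ScaledCommute q (star g) (star a) := by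
  simpa using ScaledCommute.star_star h.2.2.2.1

end SUqRel

section suqMono

variable {A : Type*} [Ring A] [StarRing A] (a g : A) (n : ℤ) (m k : ℕ)

theorem suqMono_eq : suqMono a g (n, m, k) = signedPow a n * (g ^ m * star g ^ k) :=
  mul_assoc _ _ _

theorem suqMono_mul_star_g : suqMono a g (n, m, k) * star g = suqMono a g (n, m, k + 1) := by
  rw [suqMono, suqMono, mul_assoc, ← pow_succ]

variable {a g n m k}

theorem a_mul_suqMono_of_nonneg (hn : 0 ≤ n) :
    a * suqMono a g (n, m, k) = suqMono a g (n + 1, m, k) := by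
  rw [suqMono_eq, suqMono_eq, ← mul_assoc, signedPow_add_one' a hn]

theorem star_a_mul_suqMono_of_nonpos (hn : n ≤ 0) :
    star a * suqMono a g (n, m, k) = suqMono a g (n - 1, m, k) := by
  rw [suqMono_eq, suqMono_eq, ← mul_assoc, signedPow_sub_one' a hn]

end suqMono

namespace SUqRel

variable {A : Type*} [Ring A] [Algebra ℂ A] [StarRing A] {q : ℂ} {a g : A} {n : ℤ} {m k : ℕ}

theorem star_g_mul_g_mul (h : SUqRel q a g) (m k : ℕ) :
    star g * g * (g ^ m * star g ^ k) = g ^ (m + 1) * star g ^ (k + 1) := by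
  rw [mul_assoc, ← mul_assoc g, ← pow_succ', ← mul_assoc,
    ((h.commute_g_star_g.symm).pow_right (m + 1)).eq, mul_assoc, ← pow_succ']

theorem suqMono_mul_g (h : SUqRel q a g) :
    suqMono a g (n, m, k) * g = suqMono a g (n, m + 1, k) := by
  rw [suqMono_eq, suqMono_eq, mul_assoc, mul_assoc, ← (h.commute_g_star_g.pow_right k).eq,
    ← mul_assoc (g ^ m), ← pow_succ]

theorem scaledCommute_monomial_a (h : SUqRel q a g) (hq : q ≠ 0) (m k : ℕ) :
    ScaledCommute (conj q ^ m * q ^ k)⁻¹ (g ^ m * star g ^ k) a := by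
  rw [mul_inv, ← inv_pow, ← inv_pow]
  exact ((h.scaledCommute_g_a hq).pow_left m).mul_left ((h.scaledCommute_star_g_a hq).pow_left k)

theorem scaledCommute_star_g_mul_g_a (h : SUqRel q a g) (hq : q ≠ 0) :
    ScaledCommute (q * conj q)⁻¹ (star g * g) a := by
  rw [mul_inv]; exact (h.scaledCommute_star_g_a hq).mul_left (h.scaledCommute_g_a hq)

theorem signedPow_mul_a_of_neg (h : SUqRel q a g) (hn : n < 0) :
    signedPow a n * a = signedPow a (n + 1) * (1 - star g * g) := by
  have hstep := signedPow_sub_one a (show n + 1 ≤ 0 by omega)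
  rw [add_sub_cancel_right] at hstep
  rw [hstep, mul_assoc, h.star_a_mul_a]

theorem signedPow_mul_star_a_of_pos (h : SUqRel q a g) (hn : 0 < n) :
    signedPow a n * star a = signedPow a (n - 1) * (1 - (q * conj q) • (star g * g)) := by
  have hstep := signedPow_add_one a (show 0 ≤ n - 1 by omega)
  rw [sub_add_cancel] at hstep
  rw [hstep, mul_assoc, h.a_mul_star_a]

theorem suqMono_mul_a_of_nonneg (h : SUqRel q a g) (hq : q ≠ 0) (hn : 0 ≤ n) :
    suqMono a g (n, m, k) * a = (conj q ^ m * q ^ k)⁻¹ • suqMono a g (n + 1, m, k) := by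
  rw [suqMono_eq, suqMono_eq, mul_assoc, h.scaledCommute_monomial_a hq m k, mul_smul_comm,
    ← mul_assoc, ← signedPow_add_one a hn]

theorem suqMono_mul_a_of_neg (h : SUqRel q a g) (hq : q ≠ 0) (hn : n < 0) :
    suqMono a g (n, m, k) * a = (conj q ^ m * q ^ k)⁻¹ •
      (suqMono a g (n + 1, m, k) - suqMono a g (n + 1, m + 1, k + 1)) := by
  rw [suqMono_eq, suqMono_eq, suqMono_eq, mul_assoc, h.scaledCommute_monomial_a hq m k,
    mul_smul_comm, ← mul_assoc, h.signedPow_mul_a_of_neg hn, mul_assoc, sub_mul, one_mul,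
    h.star_g_mul_g_mul, mul_sub]

variable [StarModule ℂ A]

theorem g_mul_suqMono (h : SUqRel q a g) (hq : q ≠ 0) :
    g * suqMono a g (n, m, k) = (conj q)⁻¹ ^ n • suqMono a g (n, m + 1, k) := by
  rw [suqMono_eq, suqMono_eq, ← mul_assoc,
    (h.scaledCommute_g_a hq).mul_signedPow (by simpa using h.scaledCommute_g_star_a),
    smul_mul_assoc, mul_assoc, ← mul_assoc g, ← pow_succ']

theorem star_g_mul_suqMono (h : SUqRel q a g) (hq : q ≠ 0) :
    star g * suqMono a g (n, m, k) = q⁻¹ ^ n • suqMono a g (n, m, k + 1) := by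
  rw [suqMono_eq, suqMono_eq, ← mul_assoc,
    (h.scaledCommute_star_g_a hq).mul_signedPow (by simpa using h.scaledCommute_star_g_star_a),
    smul_mul_assoc, mul_assoc, ← mul_assoc (star g), (h.commute_g_star_g.symm.pow_right m).eq,
    mul_assoc, ← pow_succ']

theorem scaledCommute_star_g_mul_g_star_a (h : SUqRel q a g) :
    ScaledCommute (q * conj q) (star g * g) (star a) :=
  h.scaledCommute_star_g_star_a.mul_left h.scaledCommute_g_star_a

theorem scaledCommute_monomial_star_a (h : SUqRel q a g) (m k : ℕ) :
    ScaledCommute (conj q ^ m * q ^ k) (g ^ m * star g ^ k) (star a) :=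
  (h.scaledCommute_g_star_a.pow_left m).mul_left (h.scaledCommute_star_g_star_a.pow_left k)

theorem suqMono_mul_star_a_of_nonpos (h : SUqRel q a g) (hn : n ≤ 0) :
    suqMono a g (n, m, k) * star a = (conj q ^ m * q ^ k) • suqMono a g (n - 1, m, k) := by
  rw [suqMono_eq, suqMono_eq, mul_assoc, h.scaledCommute_monomial_star_a m k, mul_smul_comm,
    ← mul_assoc, ← signedPow_sub_one a hn]

theorem suqMono_mul_star_a_of_pos (h : SUqRel q a g) (hn : 0 < n) :
    suqMono a g (n, m, k) * star a = (conj q ^ m * q ^ k) •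
      (suqMono a g (n - 1, m, k) - (q * conj q) • suqMono a g (n - 1, m + 1, k + 1)) := by
  rw [suqMono_eq, suqMono_eq, suqMono_eq, mul_assoc, h.scaledCommute_monomial_star_a m k,
    mul_smul_comm, ← mul_assoc, h.signedPow_mul_star_a_of_pos hn, mul_assoc, sub_mul, one_mul,
    smul_mul_assoc, h.star_g_mul_g_mul, mul_sub, mul_smul_comm]

theorem a_mul_suqMono_of_neg (h : SUqRel q a g) (hq : q ≠ 0) (hn : n < 0) :
    a * suqMono a g (n, m, k) =
      suqMono a g (n + 1, m, k) - (q * conj q)⁻¹ ^ n • suqMono a g (n + 1, m + 1, k + 1) := by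
  have hstep := signedPow_sub_one' a (show n + 1 ≤ 0 by omega)
  rw [add_sub_cancel_right] at hstep
  have hu : q * conj q ≠ 0 := mul_ne_zero hq (by simpa using hq)
  have hcoeff : (q * conj q) * (q * conj q)⁻¹ ^ (n + 1) = (q * conj q)⁻¹ ^ n := by
    rw [zpow_add_one₀ (inv_ne_zero hu), mul_comm, mul_assoc, inv_mul_cancel₀ hu, mul_one]
  rw [suqMono_eq, suqMono_eq, suqMono_eq, hstep, ← mul_assoc, ← mul_assoc a, h.a_mul_star_a,
    sub_mul, one_mul, smul_mul_assoc,
    (h.scaledCommute_star_g_mul_g_a hq).mul_signedPow (by simpa using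
      h.scaledCommute_star_g_mul_g_star_a), smul_smul, hcoeff, sub_mul, smul_mul_assoc,
    mul_assoc _ (star g * g), h.star_g_mul_g_mul]

theorem star_a_mul_suqMono_of_pos (h : SUqRel q a g) (hq : q ≠ 0) (hn : 0 < n) :
    star a * suqMono a g (n, m, k) =
      suqMono a g (n - 1, m, k) - (q * conj q)⁻¹ ^ (n - 1) • suqMono a g (n - 1, m + 1, k + 1) := by
  have hstep := signedPow_add_one' a (show 0 ≤ n - 1 by omega)
  rw [sub_add_cancel] at hstep
  rw [suqMono_eq, suqMono_eq, suqMono_eq, hstep, ← mul_assoc, ← mul_assoc (star a),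
    h.star_a_mul_a, sub_mul, one_mul,
    (h.scaledCommute_star_g_mul_g_a hq).mul_signedPow (by simpa using
      h.scaledCommute_star_g_mul_g_star_a), sub_mul, smul_mul_assoc,
    mul_assoc _ (star g * g), h.star_g_mul_g_mul]

end SUqRel

/-- The scalar forced on `αⁿγᵐγ*ᵏ` by the product rule: `S(γᵐ) = (-q̄)ᵐ ζ^(-C(m,2)) γᵐ`,
`S(γ*ᵏ) = (-q⁻¹)ᵏ ζ^(-C(k,2)) γ*ᵏ`, `ζ^(mk)` comes from the rule for `γᵐ · γ*ᵏ`, and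
`(q̄ᵐqᵏ)ⁿ` from moving `γᵐγ*ᵏ` past `α*ⁿ`. -/
def antipodeCoeff (q : ℂ) : ℤ × ℕ × ℕ → ℂ
  | (n, m, k) => (conj q ^ m * q ^ k) ^ n *
      ((-conj q) ^ m * (-q⁻¹) ^ k * (q / conj q) ^ ((m * k : ℤ) - m.choose 2 - k.choose 2))

section antipodeCoeff

variable {q : ℂ} (hq : q ≠ 0) (n : ℤ) (m k : ℕ)
include hq

theorem antipodeCoeff_add_one_fst :
    antipodeCoeff q (n + 1, m, k) = (conj q ^ m * q ^ k) * antipodeCoeff q (n, m, k) := by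
  have : conj q ^ m * q ^ k ≠ 0 := by simp [hq]
  simp only [antipodeCoeff, zpow_add_one₀ this]
  ring

theorem antipodeCoeff_succ_snd :
    antipodeCoeff q (n, m + 1, k) =
      (q / conj q) ^ (-((m : ℤ) - k)) * (-conj q) * conj q ^ n * antipodeCoeff q (n, m, k) := by
  have hζ : q / conj q ≠ 0 := by simp [hq]
  have hexp : ((m + 1 : ℕ) * k : ℤ) - (m + 1).choose 2 - k.choose 2 =
      -((m : ℤ) - k) + ((m * k : ℤ) - m.choose 2 - k.choose 2) := by
    rw [Nat.choose_succ_succ', Nat.choose_one_right]; push_cast; ring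
  simp only [antipodeCoeff, hexp, zpow_add₀ hζ, pow_succ, mul_zpow]
  ring

theorem antipodeCoeff_succ_thd :
    antipodeCoeff q (n, m, k + 1) =
      (q / conj q) ^ ((m : ℤ) - k) * (-q⁻¹) * q ^ n * antipodeCoeff q (n, m, k) := by
  have hζ : q / conj q ≠ 0 := by simp [hq]
  have hexp : (m * (k + 1 : ℕ) : ℤ) - m.choose 2 - (k + 1).choose 2 =
      ((m : ℤ) - k) + ((m * k : ℤ) - m.choose 2 - k.choose 2) := by
    rw [Nat.choose_succ_succ' k, Nat.choose_one_right]; push_cast; ring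
  simp only [antipodeCoeff, hexp, zpow_add₀ hζ, pow_succ, mul_zpow]
  ring

theorem antipodeCoeff_succ_succ :
    antipodeCoeff q (n, m + 1, k + 1) = (q * conj q) ^ n * antipodeCoeff q (n, m, k) := by
  have hζ : q / conj q ≠ 0 := by simp [hq]
  have hq' : conj q ≠ 0 := by simpa using hq
  rw [antipodeCoeff_succ_thd hq, antipodeCoeff_succ_snd hq, ← mul_assoc, ← mul_assoc, ← mul_assoc]
  congr 1
  rw [Nat.cast_succ, show ((m : ℤ) + 1 - k) = -(-((m : ℤ) - k)) + 1 by ring, zpow_add_one₀ hζ,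
    zpow_neg, mul_zpow]
  field_simp

end antipodeCoeff

theorem suqMono_mem_suqHomog {A : Type*} [Ring A] [Algebra ℂ A] [StarRing A] {a g : A}
    {n : ℤ} {m k : ℕ} {p : ℤ} (hp : (m : ℤ) - k = p) : suqMono a g (n, m, k) ∈ suqHomog a g p :=
  Submodule.subset_span ⟨(n, m, k), hp, rfl⟩

theorem suqMono_induction {A : Type*} [Ring A] [StarRing A] {a g : A} {P : ℤ → A → Prop}
    (one : P 0 1) (mul : ∀ {r s y z}, P r y → P s z → P (r + s) (y * z))
    (ha : P 0 a) (hsa : P 0 (star a)) (hg : P 1 g) (hsg : P (-1) (star g))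
    (n : ℤ) (m k : ℕ) : P ((m : ℤ) - k) (suqMono a g (n, m, k)) := by
  have pow {r : ℤ} {y : A} (hy : P r y) (t : ℕ) : P (t * r) (y ^ t) := by
    induction t with
    | zero => simpa using one
    | succ t ih => simpa [pow_succ, add_mul] using mul ih hy
  have hsignedPow : P 0 (signedPow a n) := by
    obtain ⟨t, rfl | rfl⟩ := n.eq_nat_or_neg
    · simpa using pow ha t
    · simpa using pow hsa t
  simpa [suqMono_eq, sub_eq_add_neg] using mul hsignedPow (mul (pow hg m) (pow hsg k))

namespace SUqBasis

variable {A : Type*} [Ring A] [Algebra ℂ A] [StarRing A] {a g : A}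

def basis (h : SUqBasis a g) : Module.Basis (ℤ × ℕ × ℕ) ℂ A := .mk h.1 h.2.ge

theorem basis_apply (h : SUqBasis a g) (i : ℤ × ℕ × ℕ) : h.basis i = suqMono a g i :=
  Module.Basis.mk_apply _ _ _

def antipode (h : SUqBasis a g) (q : ℂ) : A →ₗ[ℂ] A :=
  h.basis.constr ℂ fun i => antipodeCoeff q i • suqMono a g (-i.1, i.2)

variable (h : SUqBasis a g) (q : ℂ)

theorem antipode_suqMono (n : ℤ) (m k : ℕ) :
    h.antipode q (suqMono a g (n, m, k)) = antipodeCoeff q (n, m, k) • suqMono a g (-n, m, k) := by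
  rw [← h.basis_apply, antipode, Module.Basis.constr_basis]

theorem antipode_one : h.antipode q 1 = 1 := by
  simpa [suqMono, antipodeCoeff] using h.antipode_suqMono q 0 0 0

theorem antipode_a : h.antipode q a = star a := by
  simpa [suqMono, antipodeCoeff] using h.antipode_suqMono q 1 0 0

theorem antipode_star_a : h.antipode q (star a) = a := by
  simpa [suqMono, antipodeCoeff] using h.antipode_suqMono q (-1) 0 0

theorem antipode_g : h.antipode q g = (-conj q) • g := by
  simpa [suqMono, antipodeCoeff] using h.antipode_suqMono q 0 1 0

theorem antipode_star_g : h.antipode q (star g) = (-q⁻¹) • star g := by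
  simpa [suqMono, antipodeCoeff] using h.antipode_suqMono q 0 0 1

theorem antipode_mem_suqHomog {p : ℤ} {x : A} (hx : x ∈ suqHomog a g p) :
    h.antipode q x ∈ suqHomog a g p := by
  refine (Submodule.span_le (p := (suqHomog a g p).comap (h.antipode q))).2 ?_ hx
  rintro _ ⟨⟨n, m, k⟩, hp, rfl⟩
  rw [SetLike.mem_coe, Submodule.mem_comap, antipode_suqMono]
  exact Submodule.smul_mem _ _ (suqMono_mem_suqHomog hp)

end SUqBasis

section generators

variable {A : Type*} [Ring A] [Algebra ℂ A] [StarRing A] (a g : A)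

theorem one_mem_suqHomog : (1 : A) ∈ suqHomog a g 0 := by
  simpa [suqMono] using suqMono_mem_suqHomog (a := a) (g := g) (n := 0) (m := 0) (k := 0) rfl

theorem a_mem_suqHomog : a ∈ suqHomog a g 0 := by
  simpa [suqMono] using suqMono_mem_suqHomog (a := a) (g := g) (n := 1) (m := 0) (k := 0) rfl

theorem star_a_mem_suqHomog : star a ∈ suqHomog a g 0 := by
  simpa [suqMono] using suqMono_mem_suqHomog (a := a) (g := g) (n := -1) (m := 0) (k := 0) rfl

theorem g_mem_suqHomog : g ∈ suqHomog a g 1 := by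
  simpa [suqMono] using suqMono_mem_suqHomog (a := a) (g := g) (n := 0) (m := 1) (k := 0) rfl

theorem star_g_mem_suqHomog : star g ∈ suqHomog a g (-1) := by
  simpa [suqMono] using suqMono_mem_suqHomog (a := a) (g := g) (n := 0) (m := 0) (k := 1) rfl

end generators

namespace SUqRel

variable {A : Type*} [Ring A] [Algebra ℂ A] [StarRing A] [StarModule ℂ A] {q : ℂ} {a g : A}

theorem braidedAntiMulAt_g (h : SUqRel q a g) (hb : SUqBasis a g) (hq : q ≠ 0) :
    BraidedAntiMulAt (suqHomog a g) (q / conj q) (hb.antipode q) 1 g := by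
  refine .of_span (fun _ => rfl) (g_mem_suqHomog a g) ?_
  rintro p _ ⟨⟨n, m, k⟩, rfl, rfl⟩
  refine ⟨?_, ?_⟩
  · rw [h.suqMono_mul_g]; exact suqMono_mem_suqHomog (by push_cast; ring)
  · rw [h.suqMono_mul_g, hb.antipode_suqMono, hb.antipode_suqMono, hb.antipode_g, smul_mul_assoc,
      mul_smul_comm, h.g_mul_suqMono hq, smul_smul, smul_smul, smul_smul, antipodeCoeff_succ_snd hq,
      inv_zpow', neg_neg, mul_one]
    congr 1
    ring

theorem braidedAntiMulAt_star_g (h : SUqRel q a g) (hb : SUqBasis a g) (hq : q ≠ 0) :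
    BraidedAntiMulAt (suqHomog a g) (q / conj q) (hb.antipode q) (-1) (star g) := by
  refine .of_span (fun _ => rfl) (star_g_mem_suqHomog a g) ?_
  rintro p _ ⟨⟨n, m, k⟩, rfl, rfl⟩
  refine ⟨?_, ?_⟩
  · rw [suqMono_mul_star_g]; exact suqMono_mem_suqHomog (by push_cast; ring)
  · rw [suqMono_mul_star_g, hb.antipode_suqMono, hb.antipode_suqMono, hb.antipode_star_g,
      smul_mul_assoc, mul_smul_comm, h.star_g_mul_suqMono hq, smul_smul, smul_smul, smul_smul,
      antipodeCoeff_succ_thd hq, inv_zpow', neg_neg, mul_neg_one, neg_neg]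
    congr 1
    ring

theorem braidedAntiMulAt_a (h : SUqRel q a g) (hb : SUqBasis a g) (hq : q ≠ 0) :
    BraidedAntiMulAt (suqHomog a g) (q / conj q) (hb.antipode q) 0 a := by
  refine .of_span (fun _ => rfl) (a_mem_suqHomog a g) ?_
  rintro p _ ⟨⟨n, m, k⟩, rfl, rfl⟩
  rw [mul_zero, neg_zero, zpow_zero, one_smul, add_zero, hb.antipode_a, hb.antipode_suqMono,
    mul_smul_comm]
  rcases le_or_gt 0 n with hn | hn
  · rw [h.suqMono_mul_a_of_nonneg hq hn, map_smul, hb.antipode_suqMono,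
      star_a_mul_suqMono_of_nonpos (neg_nonpos.2 hn), smul_smul, neg_add']
    refine ⟨Submodule.smul_mem _ _ (suqMono_mem_suqHomog rfl), ?_⟩
    rw [antipodeCoeff_add_one_fst hq, inv_mul_cancel_left₀ (by simp [hq])]
  · rw [h.suqMono_mul_a_of_neg hq hn, map_smul, map_sub, hb.antipode_suqMono, hb.antipode_suqMono,
      h.star_a_mul_suqMono_of_pos hq (neg_pos.2 hn), neg_add']
    refine ⟨Submodule.smul_mem _ _ (sub_mem (suqMono_mem_suqHomog rfl)
      (suqMono_mem_suqHomog (by push_cast; ring))), ?_⟩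
    simp only [smul_sub, smul_smul]
    rw [antipodeCoeff_add_one_fst hq, antipodeCoeff_add_one_fst hq, antipodeCoeff_succ_succ hq]
    congr 2
    · rw [inv_mul_cancel_left₀ (by simp [hq])]
    · have hq' : conj q ≠ 0 := by simpa using hq
      rw [inv_zpow', show -(-n - 1) = n + 1 by ring, zpow_add_one₀ (by simp [hq])]
      field_simp
      ring

theorem braidedAntiMulAt_star_a (h : SUqRel q a g) (hb : SUqBasis a g) (hq : q ≠ 0) :
    BraidedAntiMulAt (suqHomog a g) (q / conj q) (hb.antipode q) 0 (star a) := by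
  refine .of_span (fun _ => rfl) (star_a_mem_suqHomog a g) ?_
  rintro p _ ⟨⟨n, m, k⟩, rfl, rfl⟩
  rw [mul_zero, neg_zero, zpow_zero, one_smul, add_zero, hb.antipode_star_a, hb.antipode_suqMono,
    mul_smul_comm]
  have hcoeff := antipodeCoeff_add_one_fst hq (n - 1) m k
  rw [sub_add_cancel] at hcoeff
  rcases le_or_gt n 0 with hn | hn
  · rw [h.suqMono_mul_star_a_of_nonpos hn, map_smul, hb.antipode_suqMono,
      a_mul_suqMono_of_nonneg (neg_nonneg.2 hn), smul_smul, neg_sub', hcoeff]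
    exact ⟨Submodule.smul_mem _ _ (suqMono_mem_suqHomog rfl), rfl⟩
  · rw [h.suqMono_mul_star_a_of_pos hn, map_smul, map_sub, map_smul, hb.antipode_suqMono,
      hb.antipode_suqMono, h.a_mul_suqMono_of_neg hq (neg_neg_iff_pos.2 hn), neg_sub']
    refine ⟨Submodule.smul_mem _ _ (sub_mem (suqMono_mem_suqHomog rfl)
      (Submodule.smul_mem _ _ (suqMono_mem_suqHomog (by push_cast; ring)))), ?_⟩
    simp only [smul_sub, smul_smul]
    rw [hcoeff, antipodeCoeff_succ_succ hq]
    congr 2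
    have hu : q * conj q ≠ 0 := by simp [hq]
    rw [inv_zpow', neg_neg, ← mul_assoc (q * conj q), ← zpow_one_add₀ hu, add_sub_cancel]
    ring

theorem braidedAntiMulAt_of_mem (h : SUqRel q a g) (hb : SUqBasis a g) (hq : q ≠ 0) {r : ℤ}
    {y : A} (hy : y ∈ suqHomog a g r) :
    BraidedAntiMulAt (suqHomog a g) (q / conj q) (hb.antipode q) r y := by
  induction hy using Submodule.span_induction with
  | mem y hy =>
    obtain ⟨⟨n, m, k⟩, rfl, rfl⟩ := hy
    exact suqMono_induction (.one (one_mem_suqHomog a g) (hb.antipode_one q))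
      (fun hy hz => hy.mul (by simp [hq]) hz) (h.braidedAntiMulAt_a hb hq)
      (h.braidedAntiMulAt_star_a hb hq) (h.braidedAntiMulAt_g hb hq)
      (h.braidedAntiMulAt_star_g hb hq) n m k
  | zero => exact .zero r
  | add y z _ _ hy hz => exact hy.add hz
  | smul c y _ hy => exact hy.smul c

theorem antipode_mul (h : SUqRel q a g) (hb : SUqBasis a g) (hq : q ≠ 0) {p r : ℤ} {x y : A}
    (hx : x ∈ suqHomog a g p) (hy : y ∈ suqHomog a g r) :
    hb.antipode q (x * y) = (q / conj q) ^ (-(p * r)) • (hb.antipode q y * hb.antipode q x) :=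
  ((h.braidedAntiMulAt_of_mem hb hq hy).2 p x hx).2

theorem mul_mem_suqHomog (h : SUqRel q a g) (hb : SUqBasis a g) (hq : q ≠ 0) {p r : ℤ} {x y : A}
    (hx : x ∈ suqHomog a g p) (hy : y ∈ suqHomog a g r) : x * y ∈ suqHomog a g (p + r) :=
  ((h.braidedAntiMulAt_of_mem hb hq hy).2 p x hx).1

theorem eq_antipode (h : SUqRel q a g) (hb : SUqBasis a g) (hq : q ≠ 0) (T : A →ₗ[ℂ] A)
    (hT1 : T 1 = 1) (hTa : T a = star a) (hTsa : T (star a) = a)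
    (hTg : T g = (-conj q) • g) (hTsg : T (star g) = (-q⁻¹) • star g)
    (hTmul : ∀ p r : ℤ, ∀ x ∈ suqHomog a g p, ∀ y ∈ suqHomog a g r,
      T (x * y) = (q / conj q) ^ (-(p * r)) • (T y * T x)) :
    T = hb.antipode q := by
  refine LinearMap.ext_on_range hb.2 fun ⟨n, m, k⟩ => ?_
  refine (suqMono_induction (P := fun r y => y ∈ suqHomog a g r ∧ T y = hb.antipode q y)
    ⟨one_mem_suqHomog a g, by rw [hT1, hb.antipode_one]⟩ ?_
    ⟨a_mem_suqHomog a g, by rw [hTa, hb.antipode_a]⟩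
    ⟨star_a_mem_suqHomog a g, by rw [hTsa, hb.antipode_star_a]⟩
    ⟨g_mem_suqHomog a g, by rw [hTg, hb.antipode_g]⟩
    ⟨star_g_mem_suqHomog a g, by rw [hTsg, hb.antipode_star_g]⟩ n m k).2
  rintro r s y z ⟨hy, hTy⟩ ⟨hz, hTz⟩
  exact ⟨h.mul_mem_suqHomog hb hq hy hz, by
    rw [hTmul r s y hy z hz, hTy, hTz, h.antipode_mul hb hq hy hz]⟩

end SUqRel

theorem suq_antipode_exists_unique_general {A : Type*} [Ring A] [Algebra ℂ A] [StarRing A]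
    [StarModule ℂ A]
    (q : ℂ) (hq0 : 0 < ‖q‖)
    (a g : A) (hrel : SUqRel q a g) (hbasis : SUqBasis a g) :
    ∃! S : A →ₗ[ℂ] A,
      S 1 = 1 ∧ S a = star a ∧ S (star a) = a ∧
      S g = (-(starRingEnd ℂ q)) • g ∧ S (star g) = (-q⁻¹) • star g ∧
      (∀ p : ℤ, ∀ x ∈ suqHomog a g p, S x ∈ suqHomog a g p) ∧
      (∀ p r : ℤ, ∀ x ∈ suqHomog a g p, ∀ y ∈ suqHomog a g r,
        S (x * y) = ((q / starRingEnd ℂ q) ^ (-(p * r))) • (S y * S x)) := by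
  have hq : q ≠ 0 := norm_pos_iff.1 hq0
  refine ⟨hbasis.antipode q, ⟨hbasis.antipode_one q, hbasis.antipode_a q,
    hbasis.antipode_star_a q, hbasis.antipode_g q, hbasis.antipode_star_g q,
    fun p x hx => hbasis.antipode_mem_suqHomog q hx,
    fun p r x hx y hy => hrel.antipode_mul hbasis hq hx hy⟩, ?_⟩
  rintro T ⟨hT1, hTa, hTsa, hTg, hTsg, -, hTmul⟩
  exact hrel.eq_antipode hbasis hq T hT1 hTa hTsa hTg hTsg hTmul

/-- Existence and uniqueness of the antipode `S` of `Pol(SU_q(2))`: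
the unique `ℂ`-linear map with `S(1) = 1`, `S(α) = α*`, `S(α*) = α`, `S(γ) = -conj(q)·γ`,
`S(γ*) = -q⁻¹·γ*`, preserving each `𝒜_p`, and braided-anti-multiplicative:
`S(ab) = ζ^{-pr}·S(b)S(a)` for `a ∈ 𝒜_p`, `b ∈ 𝒜_r`, where `ζ = q/conj(q)`. -/
theorem suq_antipode_exists_unique {A : Type*} [Ring A] [Algebra ℂ A] [StarRing A]
    [StarModule ℂ A]
    (q : ℂ) (hq0 : 0 < ‖q‖) (hq1 : ‖q‖ < 1)
    (a g : A) (hrel : SUqRel q a g) (hbasis : SUqBasis a g) :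
    ∃! S : A →ₗ[ℂ] A,
      S 1 = 1 ∧ S a = star a ∧ S (star a) = a ∧
      S g = (-(starRingEnd ℂ q)) • g ∧ S (star g) = (-q⁻¹) • star g ∧
      (∀ p : ℤ, ∀ x ∈ suqHomog a g p, S x ∈ suqHomog a g p) ∧
      (∀ p r : ℤ, ∀ x ∈ suqHomog a g p, ∀ y ∈ suqHomog a g r,
        S (x * y) = ((q / starRingEnd ℂ q) ^ (-(p * r))) • (S y * S x)) :=
  suq_antipode_exists_unique_general q hq0 a g hrel hbasis
end
end

section
/- For every t ∈ ℝ, the maps τ_t and σ_t are unital ℂ-algebra automorphisms of 𝒜, one has τ_t ∘ σ_s = σ_s ∘ τ_t for all s, t ∈ ℝ, and the following identities hold as maps 𝒜 → 𝒜 ⊗_ℂ 𝒜: Δ ∘ τ_t = (τ_t⊗τ_t) ∘ Δ = (σ_t⊗σ_{−t}) ∘ Δ and Δ ∘ σ_t = (τ_t⊗σ_t) ∘ Δ = (σ_t⊗τ_{−t}) ∘ Δ. -/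
/-!
The monomial basis makes `𝒜` a `ℤ × ℤ`-graded algebra, `αⁿγᵐ(γ*)ᵏ` having bidegree `(n, m - k)`:
the defining relations only reorder generators up to scalars or trade `α*α`, `αα*` for
combinations of `1` and `γ*γ`, neither of which changes the bidegree. On the part of bidegree
`(n, p)`, `τ_t` is multiplication by `|q|^{2itp}` and `σ_t` by `|q|^{-2itn}`, so both act
through characters of `ℤ × ℤ`; this makes them unital automorphisms with inverses `τ_{-t}` and
`σ_{-t}`, and any two of them commute. Finally `Δ` maps the part of bidegree `(n, p)` into the
span of tensors `u ⊗ v` of homogeneous elements whose bidegrees satisfy three linear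
constraints, and these constraints force each of `τ_t ⊗ τ_t`, `σ_t ⊗ σ_{-t}`, `τ_t ⊗ σ_t`,
`σ_t ⊗ τ_{-t}` to act on such `u ⊗ v` by the same scalar as `τ_t` resp. `σ_t` on bidegree
`(n, p)`.
-/

open scoped TensorProduct

noncomputable section

/-- The scaling group: `τ_t(a) = |q|^{2itp}·a` for `a ∈ 𝒜_p`,
where `|q|^{2it} = exp(2it·log|q|)`. -/
def SUqScaling {A : Type*} [Ring A] [Algebra ℂ A] [StarRing A] (q : ℂ) (a g : A)
    (τ : ℝ → (A →ₗ[ℂ] A)) : Prop :=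
  ∀ (t : ℝ) (p : ℤ), ∀ x ∈ suqHomog a g p,
    τ t x = Complex.exp (2 * Complex.I * (t : ℂ) *
      ((Real.log (‖q‖) : ℝ) : ℂ) * (p : ℂ)) • x

/-- The modular group, defined on the basis: `σ_t(αⁿγᵐ(γ*)ᵏ) = |q|^{-2itn}·αⁿγᵐ(γ*)ᵏ` and
`σ_t((α*)ⁿγᵐ(γ*)ᵏ) = |q|^{2itn}·(α*)ⁿγᵐ(γ*)ᵏ`. -/
def SUqModular {A : Type*} [Ring A] [Algebra ℂ A] [StarRing A] (q : ℂ) (a g : A)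
    (σ : ℝ → (A →ₗ[ℂ] A)) : Prop :=
  ∀ (t : ℝ) (i : ℤ × ℕ × ℕ),
    σ t (suqMono a g i) = Complex.exp (-(2 * Complex.I * (t : ℂ) *
      ((Real.log (‖q‖) : ℝ) : ℂ) * (i.1 : ℂ))) • suqMono a g i

namespace SUq

section ScalarAction

variable {ι R M N : Type*} [CommSemiring R] [AddCommMonoid M] [Module R M]
  [AddCommMonoid N] [Module R N]

def ActsBy (W : ι → Submodule R M) (c : ι → R) (f : M →ₗ[R] M) : Prop :=
  ∀ i, ∀ x ∈ W i, f x = c i • x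

variable {W : ι → Submodule R M} {c c' : ι → R} {f f' : M →ₗ[R] M}

theorem actsBy_id : ActsBy W 1 LinearMap.id := fun _ _ _ => by simp

theorem ActsBy.comp (hf : ActsBy W c f) (hf' : ActsBy W c' f') :
    ActsBy W (c * c') (f ∘ₗ f') := fun i x hx => by
  rw [LinearMap.comp_apply, hf' i x hx, map_smul, hf i x hx, smul_smul, Pi.mul_apply,
    mul_comm]

theorem ActsBy.comp_eq_comp {V : ι → Submodule R N} {g : N →ₗ[R] N} {Δ : M →ₗ[R] N}
    (hW : iSup W = ⊤) (hΔ : ∀ i, ∀ x ∈ W i, Δ x ∈ V i) (hf : ActsBy W c f) (hg : ActsBy V c g) :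
    Δ ∘ₗ f = g ∘ₗ Δ := by
  rw [← LinearMap.eqLocus_eq_top, eq_top_iff, ← hW, iSup_le_iff]
  intro i x hx
  simp [hf i x hx, hg i _ (hΔ i x hx)]

theorem ActsBy.eq (hW : iSup W = ⊤) (hf : ActsBy W c f) (hf' : ActsBy W c f') : f = f' := by
  simpa using hf.comp_eq_comp (Δ := LinearMap.id) hW (fun _ _ hx => hx) hf'

theorem ActsBy.comp_comm (hW : iSup W = ⊤) (hf : ActsBy W c f) (hf' : ActsBy W c' f') :
    f ∘ₗ f' = f' ∘ₗ f :=
  (hf.comp hf').eq hW (mul_comm c c' ▸ hf'.comp hf)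

theorem ActsBy.bijective (hW : iSup W = ⊤) (hf : ActsBy W c f) (hf' : ActsBy W c' f')
    (hcc' : c * c' = 1) : Function.Bijective f := by
  refine Function.bijective_iff_has_inverse.mpr ⟨f', fun x => ?_, fun x => ?_⟩
  · exact LinearMap.congr_fun ((hf'.comp hf).eq hW (mul_comm c c' ▸ hcc' ▸ actsBy_id)) x
  · exact LinearMap.congr_fun ((hf.comp hf').eq hW (hcc' ▸ actsBy_id)) x

def tensorSpan (W : ι → Submodule R M) (s : Set (ι × ι)) : Submodule R (M ⊗[R] M) :=
  Submodule.span R {z | ∃ e ∈ s, ∃ u ∈ W e.1, ∃ v ∈ W e.2, z = u ⊗ₜ v}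

theorem ActsBy.tensorMap {κ : Type*} {S : κ → Set (ι × ι)} {c₁ c₂ : ι → R} {c : κ → R}
    {f₁ f₂ : M →ₗ[R] M} (h₁ : ActsBy W c₁ f₁) (h₂ : ActsBy W c₂ f₂)
    (hc : ∀ k, ∀ e ∈ S k, c₁ e.1 * c₂ e.2 = c k) :
    ActsBy (fun k => tensorSpan W (S k)) c (TensorProduct.map f₁ f₂) := by
  intro k z hz
  change z ∈ LinearMap.eqLocus (TensorProduct.map f₁ f₂) (c k • LinearMap.id)
  refine Submodule.span_le.mpr ?_ hz
  rintro _ ⟨e, he, u, hu, v, hv, rfl⟩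
  rw [SetLike.mem_coe, LinearMap.mem_eqLocus, TensorProduct.map_tmul, h₁ _ u hu, h₂ _ v hv,
    TensorProduct.smul_tmul_smul, hc k e he]
  rfl

end ScalarAction

section Graded

variable {ι R A : Type*} [AddMonoid ι] [CommSemiring R] [Semiring A] [Algebra R A]
  {W : ι → Submodule R A} [SetLike.GradedMonoid W] {χ : AddChar ι R} {f : A →ₗ[R] A}

theorem ActsBy.map_one (hf : ActsBy W χ f) : f 1 = 1 := by
  simp [hf 0 1 SetLike.GradedOne.one_mem]

theorem ActsBy.map_mul (hW : iSup W = ⊤) (hf : ActsBy W χ f) (x y : A) :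
    f (x * y) = f x * f y := by
  have hx : x ∈ ⨆ i, W i := hW ▸ Submodule.mem_top
  have hy : y ∈ ⨆ i, W i := hW ▸ Submodule.mem_top
  refine Submodule.iSup_induction W (motive := fun x => f (x * y) = f x * f y) hx
    (fun i x hx => ?_) (by simp) (fun x x' hx hx' => by simp [add_mul, hx, hx'])
  refine Submodule.iSup_induction W (motive := fun y => f (x * y) = f x * f y) hy
    (fun j y hy => ?_) (by simp) (fun y y' hy hy' => by simp [mul_add, hy, hy'])
  rw [hf _ _ (SetLike.mul_mem_graded hx hy), hf i x hx, hf j y hy, AddChar.map_add_eq_mul,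
    smul_mul_smul_comm]

end Graded

section RightMultipliers

variable {ι R A : Type*} [AddMonoid ι] [CommSemiring R] [Semiring A] [Algebra R A]
  {W : ι → Submodule R A}

def rightMultipliers (W : ι → Submodule R A) (d : ι) : Submodule R A :=
  ⨅ e, ⨅ y ∈ W e, (W (e + d)).comap (LinearMap.mulLeft R y)

theorem mem_rightMultipliers {d : ι} {x : A} :
    x ∈ rightMultipliers W d ↔ ∀ e, ∀ y ∈ W e, y * x ∈ W (e + d) := by
  simp [rightMultipliers]

instance : SetLike.GradedMonoid (rightMultipliers W) where
  one_mem := mem_rightMultipliers.mpr fun e y hy => by simpa using hy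
  mul_mem d d' x x' hx hx' := mem_rightMultipliers.mpr fun e y hy => by
    rw [← mul_assoc, ← add_assoc]
    exact mem_rightMultipliers.mp hx' _ _ (mem_rightMultipliers.mp hx e y hy)

theorem gradedMonoid_of_le_rightMultipliers (h₁ : (1 : A) ∈ W 0)
    (h : ∀ d, W d ≤ rightMultipliers W d) : SetLike.GradedMonoid W where
  one_mem := h₁
  mul_mem d e x _ hx hy := mem_rightMultipliers.mp (h e hy) d x hx

end RightMultipliers

theorem pow_mul_eq_smul_mul_pow {R A : Type*} [CommSemiring R] [Semiring A] [Algebra R A]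
    {x y : A} {s : R} (h : x * y = s • (y * x)) (m : ℕ) : x ^ m * y = s ^ m • (y * x ^ m) := by
  induction m with
  | zero => simp
  | succ m ih =>
    rw [pow_succ, mul_assoc, h, mul_smul_comm, ← mul_assoc, ih, smul_mul_assoc, smul_smul,
      mul_assoc, ← pow_succ, pow_succ s, mul_comm s]

end SUq

namespace SUqRel

variable {A : Type*} [Ring A] [Algebra ℂ A] [StarRing A] {q : ℂ} {a g : A}

theorem g_mul_a (hq : q ≠ 0) (hrel : SUqRel q a g) :
    g * a = (starRingEnd ℂ q)⁻¹ • (a * g) := by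
  rw [hrel.2.2.2.1, smul_smul, inv_mul_cancel₀ (by simpa using hq), one_smul]

theorem star_g_mul_a (hq : q ≠ 0) (hrel : SUqRel q a g) : star g * a = q⁻¹ • (a * star g) := by
  rw [hrel.2.2.2.2, smul_smul, inv_mul_cancel₀ hq, one_smul]

variable [StarModule ℂ A]

theorem g_mul_star_a (hrel : SUqRel q a g) :
    g * star a = starRingEnd ℂ q • (star a * g) := by
  simpa using congrArg star hrel.2.2.2.2

theorem star_g_mul_star_a (hrel : SUqRel q a g) : star g * star a = q • (star a * star g) := by
  simpa using congrArg star hrel.2.2.2.1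

end SUqRel

namespace SUq

def bidegree (i : ℤ × ℕ × ℕ) : ℤ × ℤ := (i.1, i.2.1 - i.2.2)

def apow {A : Type*} [Monoid A] [Star A] (a : A) (n : ℤ) : A :=
  if 0 ≤ n then a ^ n.toNat else star a ^ (-n).toNat

theorem apow_natCast {A : Type*} [Monoid A] [Star A] (a : A) (k : ℕ) : apow a k = a ^ k := by
  simp [apow]

theorem apow_neg_natCast {A : Type*} [Monoid A] [Star A] (a : A) (k : ℕ) :
    apow a (-k) = star a ^ k := by
  rcases k with _ | k
  · simp [apow]
  · rw [apow, if_neg (by omega), neg_neg, Int.toNat_natCast]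

theorem suqMono_eq {A : Type*} [Ring A] [StarRing A] (a g : A) (i : ℤ × ℕ × ℕ) :
    suqMono a g i = apow a i.1 * g ^ i.2.1 * star g ^ i.2.2 :=
  rfl

section Bigrading

variable {A : Type*} [Ring A] [Algebra ℂ A] [StarRing A] {a g : A}

def bigrading (a g : A) (d : ℤ × ℤ) : Submodule ℂ A :=
  Submodule.span ℂ (suqMono a g '' {i | bidegree i = d})

theorem suqMono_mem_bigrading (i : ℤ × ℕ × ℕ) : suqMono a g i ∈ bigrading a g (bidegree i) :=
  Submodule.subset_span (Set.mem_image_of_mem _ rfl)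

theorem bigrading_le_suqHomog (d : ℤ × ℤ) : bigrading a g d ≤ suqHomog a g d.2 :=
  Submodule.span_le.mpr <| by
    rintro _ ⟨i, rfl, rfl⟩
    exact Submodule.subset_span ⟨i, rfl, rfl⟩

theorem iSup_bigrading (h : Submodule.span ℂ (Set.range (suqMono a g)) = ⊤) :
    iSup (bigrading a g) = ⊤ := by
  rw [eq_top_iff, ← h, Submodule.span_le]
  rintro _ ⟨i, rfl⟩
  exact Submodule.mem_iSup_of_mem _ (suqMono_mem_bigrading i)

theorem apow_mem_bigrading (n : ℤ) : apow a n ∈ bigrading a g (n, 0) := by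
  simpa [suqMono, bidegree, apow] using suqMono_mem_bigrading (a := a) (g := g) (n, 0, 0)

theorem a_mem_bigrading : a ∈ bigrading a g (1, 0) := by
  simpa [suqMono, bidegree, apow] using suqMono_mem_bigrading (a := a) (g := g) (1, 0, 0)

theorem star_a_mem_bigrading : star a ∈ bigrading a g (-1, 0) := by
  simpa [suqMono, bidegree, apow] using suqMono_mem_bigrading (a := a) (g := g) (-1, 0, 0)

theorem g_mem_bigrading : g ∈ bigrading a g (0, 1) := by
  simpa [suqMono, bidegree, apow] using suqMono_mem_bigrading (a := a) (g := g) (0, 1, 0)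

theorem star_g_mem_bigrading : star g ∈ bigrading a g (0, -1) := by
  simpa [suqMono, bidegree, apow] using suqMono_mem_bigrading (a := a) (g := g) (0, 0, 1)

theorem bigrading_le_of_gradedMonoid (V : ℤ × ℤ → Submodule ℂ A) [SetLike.GradedMonoid V]
    (ha : a ∈ V (1, 0)) (ha' : star a ∈ V (-1, 0)) (hg : g ∈ V (0, 1))
    (hg' : star g ∈ V (0, -1)) (d : ℤ × ℤ) : bigrading a g d ≤ V d := by
  refine Submodule.span_le.mpr ?_
  rintro _ ⟨⟨n, m, k⟩, rfl, rfl⟩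
  have hapow : apow a n ∈ V (n, 0) := by
    obtain ⟨k, rfl | rfl⟩ := n.eq_nat_or_neg
    · rw [apow_natCast]
      convert SetLike.pow_mem_graded k ha using 2
      ext <;> simp
    · rw [apow_neg_natCast]
      convert SetLike.pow_mem_graded k ha' using 2
      ext <;> simp
  rw [SetLike.mem_coe, suqMono_eq]
  convert SetLike.mul_mem_graded (SetLike.mul_mem_graded hapow (SetLike.pow_mem_graded m hg))
    (SetLike.pow_mem_graded k hg') using 2
  ext <;> simp [bidegree, sub_eq_add_neg]

end Bigrading

section Multiplication

variable {A : Type*} [Ring A] [Algebra ℂ A] [StarRing A] {q : ℂ} {a g : A}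

theorem apow_mul_self (hrel : SUqRel q a g) (n : ℤ) :
    ∃ c : ℂ, apow a n * a = apow a (n + 1) + c • (apow a (n + 1) * (star g * g)) := by
  obtain ⟨k, rfl | rfl⟩ := n.eq_nat_or_neg
  · refine ⟨0, ?_⟩
    rw [← Nat.cast_succ, apow_natCast, apow_natCast, pow_succ, zero_smul, add_zero]
  cases k with
  | zero => exact ⟨0, by simp [apow]⟩
  | succ k =>
    refine ⟨-1, ?_⟩
    rw [show -((k + 1 : ℕ) : ℤ) + 1 = -(k : ℤ) by push_cast; ring, apow_neg_natCast,
      apow_neg_natCast, pow_succ, mul_assoc, eq_sub_of_add_eq hrel.1, mul_sub, mul_one,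
      neg_smul, one_smul, sub_eq_add_neg]

theorem apow_mul_star_self (hrel : SUqRel q a g) (n : ℤ) :
    ∃ c : ℂ, apow a n * star a = apow a (n - 1) + c • (apow a (n - 1) * (star g * g)) := by
  obtain ⟨k, rfl | rfl⟩ := n.eq_nat_or_neg
  · cases k with
    | zero => exact ⟨0, by simp [apow]⟩
    | succ k =>
      refine ⟨-((‖q‖ : ℂ) ^ 2), ?_⟩
      rw [Nat.cast_succ, add_sub_cancel_right, ← Nat.cast_succ, apow_natCast, apow_natCast,
        pow_succ, mul_assoc, eq_sub_of_add_eq hrel.2.1, mul_sub, mul_one, mul_smul_comm,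
        neg_smul, sub_eq_add_neg]
  · refine ⟨0, ?_⟩
    rw [show -(k : ℤ) - 1 = -((k + 1 : ℕ) : ℤ) by push_cast; ring, apow_neg_natCast,
      apow_neg_natCast, pow_succ, zero_smul, add_zero]

end Multiplication

section GradedMonoid

variable {A : Type*} [Ring A] [Algebra ℂ A] [StarRing A] {q : ℂ} {a g : A}

theorem mem_rightMultipliers_of_suqMono {x : A} {d : ℤ × ℤ}
    (h : ∀ i, suqMono a g i * x ∈ bigrading a g (bidegree i + d)) :
    x ∈ rightMultipliers (bigrading a g) d := by
  refine mem_rightMultipliers.mpr fun e y hy => ?_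
  refine (Submodule.span_le (p := (bigrading a g (e + d)).comap (LinearMap.mulRight ℂ x))).mpr
    ?_ hy
  rintro _ ⟨i, rfl, rfl⟩
  exact h i

theorem g_mem_rightMultipliers (hcomm : Commute g (star g)) :
    g ∈ rightMultipliers (bigrading a g) (0, 1) := by
  refine mem_rightMultipliers_of_suqMono fun ⟨n, m, k⟩ => ?_
  have h : suqMono a g (n, m, k) * g = suqMono a g (n, m + 1, k) := by
    simp only [suqMono_eq, mul_assoc, ((hcomm.symm.pow_left k).eq), pow_succ]
  rw [h]
  convert suqMono_mem_bigrading (n, m + 1, k) using 2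
  ext <;> simp [bidegree]; omega

theorem star_g_mem_rightMultipliers : star g ∈ rightMultipliers (bigrading a g) (0, -1) := by
  refine mem_rightMultipliers_of_suqMono fun ⟨n, m, k⟩ => ?_
  rw [suqMono_eq, mul_assoc, ← pow_succ, ← suqMono_eq (i := (n, m, k + 1))]
  convert suqMono_mem_bigrading (n, m, k + 1) using 2
  ext <;> simp [bidegree]; omega

theorem mem_rightMultipliers_of_apow_mul (hcomm : Commute g (star g)) {C : A} {s s' : ℂ}
    {δ : ℤ} (hgC : g * C = s • (C * g)) (hg'C : star g * C = s' • (C * star g))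
    (hC : ∀ n, ∃ c : ℂ, apow a n * C = apow a (n + δ) + c • (apow a (n + δ) * (star g * g))) :
    C ∈ rightMultipliers (bigrading a g) (δ, 0) := by
  refine mem_rightMultipliers_of_suqMono fun ⟨n, m, k⟩ => ?_
  obtain ⟨c, hc⟩ := hC n
  have hswap : g ^ m * star g ^ k * C = (s ^ m * s' ^ k) • (C * (g ^ m * star g ^ k)) := by
    rw [mul_assoc, pow_mul_eq_smul_mul_pow hg'C, mul_smul_comm, ← mul_assoc,
      pow_mul_eq_smul_mul_pow hgC, smul_mul_assoc, mul_assoc, smul_smul, mul_comm (s' ^ k)]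
  have hapowC : apow a n * C ∈ bigrading a g (n + δ, 0) := by
    have hmono : apow a (n + δ) * (star g * g) = suqMono a g (n + δ, 1, 1) := by
      rw [suqMono_eq, pow_one, pow_one, mul_assoc, hcomm.eq]
    rw [hc, hmono]
    refine add_mem (apow_mem_bigrading _) (Submodule.smul_mem _ _ ?_)
    simpa [bidegree] using suqMono_mem_bigrading (a := a) (g := g) (n + δ, 1, 1)
  have hgens : g ^ m * star g ^ k ∈ rightMultipliers (bigrading a g) (0, m - k) := by
    convert SetLike.mul_mem_graded (SetLike.pow_mem_graded m (g_mem_rightMultipliers hcomm))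
      (SetLike.pow_mem_graded k (star_g_mem_rightMultipliers (a := a))) using 2
    ext <;> simp [sub_eq_add_neg]
  rw [suqMono_eq, mul_assoc _ (g ^ m), mul_assoc, hswap, mul_smul_comm, ← mul_assoc]
  refine Submodule.smul_mem _ _ ?_
  convert mem_rightMultipliers.mp hgens _ _ hapowC using 2
  ext <;> simp [bidegree]

theorem bigrading_gradedMonoid [StarModule ℂ A] (hq : q ≠ 0) (hrel : SUqRel q a g) :
    SetLike.GradedMonoid (bigrading a g) := by
  have hcomm : Commute g (star g) := hrel.2.2.1
  refine gradedMonoid_of_le_rightMultipliers ?_ (bigrading_le_of_gradedMonoid _ ?_ ?_ ?_ ?_)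
  · simpa [suqMono, bidegree, apow, Prod.mk_zero_zero] using
      suqMono_mem_bigrading (a := a) (g := g) (0, 0, 0)
  · exact mem_rightMultipliers_of_apow_mul hcomm (hrel.g_mul_a hq) (hrel.star_g_mul_a hq)
      (apow_mul_self hrel)
  · refine mem_rightMultipliers_of_apow_mul hcomm hrel.g_mul_star_a hrel.star_g_mul_star_a
      fun n => ?_
    simpa [sub_eq_add_neg] using apow_mul_star_self hrel n
  · exact g_mem_rightMultipliers hcomm
  · exact star_g_mem_rightMultipliers

end GradedMonoid

section Characters

def scalingChar (q : ℂ) (t : ℝ) : AddChar (ℤ × ℤ) ℂ where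
  toFun d := Complex.exp (2 * Complex.I * t * Real.log ‖q‖ * d.2)
  map_zero_eq_one' := by simp
  map_add_eq_mul' d e := by rw [← Complex.exp_add, Prod.snd_add, Int.cast_add, mul_add]

def modularChar (q : ℂ) (t : ℝ) : AddChar (ℤ × ℤ) ℂ where
  toFun d := Complex.exp (-(2 * Complex.I * t * Real.log ‖q‖ * d.1))
  map_zero_eq_one' := by simp
  map_add_eq_mul' d e := by
    rw [← Complex.exp_add, Prod.fst_add, Int.cast_add, mul_add, neg_add]

variable (q : ℂ) (t : ℝ)

theorem scalingChar_mul_neg : ⇑(scalingChar q t) * ⇑(scalingChar q (-t)) = 1 := by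
  ext d
  simp [scalingChar, ← Complex.exp_add]

theorem modularChar_mul_neg : ⇑(modularChar q t) * ⇑(modularChar q (-t)) = 1 := by
  ext d
  simp [modularChar, ← Complex.exp_add]

/-- `n - p` and `n + p` are the weights of the bidegree `(n, p)` under the left and right
coactions of the diagonal torus, and `Δ` maps the part of weights `(l, r)` into the sum of the
parts of weights `(l, k) ⊗ (k, r)`. -/
def comulSupport (d : ℤ × ℤ) : Set ((ℤ × ℤ) × (ℤ × ℤ)) :=
  {e | e.1.1 - e.1.2 = d.1 - d.2 ∧ e.1.1 + e.1.2 = e.2.1 - e.2.2 ∧ e.2.1 + e.2.2 = d.1 + d.2}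

theorem scalingChar_mul_scalingChar :
    ∀ d, ∀ e ∈ comulSupport d, scalingChar q t e.1 * scalingChar q t e.2 = scalingChar q t d := by
  rintro d e ⟨h₁, h₂, h₃⟩
  have h : (e.1.2 + e.2.2 : ℂ) = d.2 := by exact_mod_cast (by omega : e.1.2 + e.2.2 = d.2)
  simp only [scalingChar, AddChar.coe_mk, ← Complex.exp_add]
  congr 1
  linear_combination (2 * Complex.I * t * Real.log ‖q‖) * h

theorem modularChar_mul_modularChar_neg :
    ∀ d, ∀ e ∈ comulSupport d,
      modularChar q t e.1 * modularChar q (-t) e.2 = scalingChar q t d := by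
  rintro d e ⟨h₁, h₂, h₃⟩
  have h : (e.2.1 - e.1.1 : ℂ) = d.2 := by exact_mod_cast (by omega : e.2.1 - e.1.1 = d.2)
  simp only [scalingChar, modularChar, AddChar.coe_mk, ← Complex.exp_add]
  congr 1
  push_cast
  linear_combination (2 * Complex.I * t * Real.log ‖q‖) * h

theorem scalingChar_mul_modularChar :
    ∀ d, ∀ e ∈ comulSupport d, scalingChar q t e.1 * modularChar q t e.2 = modularChar q t d := by
  rintro d e ⟨h₁, h₂, h₃⟩
  have h : (e.1.2 - e.2.1 : ℂ) = -d.1 := by exact_mod_cast (by omega : e.1.2 - e.2.1 = -d.1)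
  simp only [scalingChar, modularChar, AddChar.coe_mk, ← Complex.exp_add]
  congr 1
  linear_combination (2 * Complex.I * t * Real.log ‖q‖) * h

theorem modularChar_mul_scalingChar_neg :
    ∀ d, ∀ e ∈ comulSupport d,
      modularChar q t e.1 * scalingChar q (-t) e.2 = modularChar q t d := by
  rintro d e ⟨h₁, h₂, h₃⟩
  have h : (e.1.1 + e.2.2 : ℂ) = d.1 := by exact_mod_cast (by omega : e.1.1 + e.2.2 = d.1)
  simp only [scalingChar, modularChar, AddChar.coe_mk, ← Complex.exp_add]
  congr 1
  push_cast
  linear_combination -(2 * Complex.I * t * Real.log ‖q‖) * h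

end Characters

section Actions

variable {A : Type*} [Ring A] [Algebra ℂ A] [StarRing A] {q : ℂ} {a g : A}

theorem actsBy_scaling {τ : ℝ → A →ₗ[ℂ] A} (hτ : SUqScaling q a g τ) (t : ℝ) :
    ActsBy (bigrading a g) (scalingChar q t) (τ t) :=
  fun d x hx => hτ t d.2 x (bigrading_le_suqHomog d hx)

theorem actsBy_modular {σ : ℝ → A →ₗ[ℂ] A} (hσ : SUqModular q a g σ) (t : ℝ) :
    ActsBy (bigrading a g) (modularChar q t) (σ t) := by
  intro d x hx
  refine (Submodule.span_le (p := LinearMap.eqLocus (σ t) (modularChar q t d • LinearMap.id))).mpr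
    ?_ hx
  rintro _ ⟨i, rfl, rfl⟩
  exact hσ t i

end Actions

section Comultiplication

variable {A : Type*} [Ring A] [Algebra ℂ A] [StarRing A] {q : ℂ} {a g : A}
  {μ : A ⊗[ℂ] A →ₗ[ℂ] A ⊗[ℂ] A →ₗ[ℂ] A ⊗[ℂ] A}

def comulGrading (a g : A) (d : ℤ × ℤ) : Submodule ℂ (A ⊗[ℂ] A) :=
  tensorSpan (bigrading a g) (comulSupport d)

theorem tmul_mem_comulGrading {d d₁ d₂ : ℤ × ℤ} {u v : A} (hu : u ∈ bigrading a g d₁)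
    (hv : v ∈ bigrading a g d₂) (h : (d₁, d₂) ∈ comulSupport d) :
    u ⊗ₜ v ∈ comulGrading a g d :=
  Submodule.subset_span ⟨(d₁, d₂), h, u, hu, v, hv, rfl⟩

variable [SetLike.GradedMonoid (bigrading a g)]

theorem mul_mem_comulGrading (hμ : SUqBraidedMul q a g μ) {d e : ℤ × ℤ} {z w : A ⊗[ℂ] A}
    (hz : z ∈ comulGrading a g d) (hw : w ∈ comulGrading a g e) :
    μ z w ∈ comulGrading a g (d + e) := by
  suffices Submodule.map₂ μ (comulGrading a g d) (comulGrading a g e) ≤ comulGrading a g (d + e)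
    from this (Submodule.apply_mem_map₂ μ hz hw)
  rw [comulGrading, comulGrading, tensorSpan, tensorSpan, Submodule.map₂_span_span,
    Submodule.span_le]
  rintro _ ⟨_, ⟨e₁, he₁, u, hu, v, hv, rfl⟩, _, ⟨e₂, he₂, u', hu', v', hv', rfl⟩, rfl⟩
  change μ (u ⊗ₜ v) (u' ⊗ₜ v') ∈ comulGrading a g (d + e)
  rw [hμ u v' _ _ v (bigrading_le_suqHomog _ hv) u' (bigrading_le_suqHomog _ hu')]
  refine Submodule.smul_mem _ _ (tmul_mem_comulGrading (SetLike.mul_mem_graded hu hu')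
    (SetLike.mul_mem_graded hv hv') ?_)
  simp only [comulSupport, Set.mem_ofPred_eq, Prod.fst_add, Prod.snd_add] at he₁ he₂ ⊢
  omega

theorem comul_mem_comulGrading {Δ : A →ₗ[ℂ] A ⊗[ℂ] A} (hμ : SUqBraidedMul q a g μ)
    (hΔ : SUqComul q a g μ Δ) (d : ℤ × ℤ) : ∀ x ∈ bigrading a g d, Δ x ∈ comulGrading a g d := by
  obtain ⟨hone, hmul, ha, hg, ha', hg'⟩ := hΔ
  let V e := (comulGrading a g e).comap Δ
  have : SetLike.GradedMonoid V :=
    { one_mem := by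
        simp only [V, Submodule.mem_comap, hone]
        exact tmul_mem_comulGrading SetLike.GradedOne.one_mem SetLike.GradedOne.one_mem
          (by simp [comulSupport])
      mul_mem := fun d e x y hx hy => by
        simp only [V, Submodule.mem_comap, hmul] at hx hy ⊢
        exact mul_mem_comulGrading hμ hx hy }
  refine fun x hx => bigrading_le_of_gradedMonoid V ?_ ?_ ?_ ?_ d hx <;>
    simp only [V, Submodule.mem_comap, ha, hg, ha', hg']
  · exact sub_mem (tmul_mem_comulGrading a_mem_bigrading a_mem_bigrading (by simp [comulSupport]))
      (Submodule.smul_mem _ _ (tmul_mem_comulGrading star_g_mem_bigrading g_mem_bigrading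
        (by simp [comulSupport])))
  · exact sub_mem (tmul_mem_comulGrading star_a_mem_bigrading star_a_mem_bigrading
      (by simp [comulSupport]))
      (Submodule.smul_mem _ _ (tmul_mem_comulGrading g_mem_bigrading star_g_mem_bigrading
        (by simp [comulSupport])))
  · exact add_mem (tmul_mem_comulGrading g_mem_bigrading a_mem_bigrading (by simp [comulSupport]))
      (tmul_mem_comulGrading star_a_mem_bigrading g_mem_bigrading (by simp [comulSupport]))
  · exact add_mem (tmul_mem_comulGrading star_g_mem_bigrading star_a_mem_bigrading
      (by simp [comulSupport]))
      (tmul_mem_comulGrading a_mem_bigrading star_g_mem_bigrading (by simp [comulSupport]))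

end Comultiplication

end SUq

theorem suq_scaling_modular_general {A : Type*} [Ring A] [Algebra ℂ A] [StarRing A] [StarModule ℂ A]
    (q : ℂ) (hq0 : 0 < ‖q‖)
    (a g : A) (hrel : SUqRel q a g) (hbasis : SUqBasis a g)
    (μ : A ⊗[ℂ] A →ₗ[ℂ] A ⊗[ℂ] A →ₗ[ℂ] A ⊗[ℂ] A) (hμ : SUqBraidedMul q a g μ)
    (Δ : A →ₗ[ℂ] A ⊗[ℂ] A) (hΔ : SUqComul q a g μ Δ)
    (τ : ℝ → (A →ₗ[ℂ] A)) (hτ : SUqScaling q a g τ)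
    (σ : ℝ → (A →ₗ[ℂ] A)) (hσ : SUqModular q a g σ) :
    (∀ t : ℝ, τ t 1 = 1 ∧ (∀ x y : A, τ t (x * y) = τ t x * τ t y) ∧
      Function.Bijective (τ t)) ∧
    (∀ t : ℝ, σ t 1 = 1 ∧ (∀ x y : A, σ t (x * y) = σ t x * σ t y) ∧
      Function.Bijective (σ t)) ∧
    (∀ s t : ℝ, ∀ x : A, τ t (σ s x) = σ s (τ t x)) ∧
    (∀ t : ℝ, ∀ x : A,
      Δ (τ t x) = (TensorProduct.map (τ t) (τ t)) (Δ x) ∧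
      Δ (τ t x) = (TensorProduct.map (σ t) (σ (-t))) (Δ x) ∧
      Δ (σ t x) = (TensorProduct.map (τ t) (σ t)) (Δ x) ∧
      Δ (σ t x) = (TensorProduct.map (σ t) (τ (-t))) (Δ x)) := by
  open SUq in
  have := bigrading_gradedMonoid (norm_pos_iff.mp hq0) hrel
  have hW := iSup_bigrading hbasis.2
  have hτW := actsBy_scaling hτ
  have hσW := actsBy_modular hσ
  have hΔW := comul_mem_comulGrading hμ hΔ
  refine ⟨fun t => ⟨(hτW t).map_one, (hτW t).map_mul hW,
      (hτW t).bijective hW (hτW (-t)) (scalingChar_mul_neg q t)⟩,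
    fun t => ⟨(hσW t).map_one, (hσW t).map_mul hW,
      (hσW t).bijective hW (hσW (-t)) (modularChar_mul_neg q t)⟩,
    fun s t => LinearMap.congr_fun ((hτW t).comp_comm hW (hσW s)),
    fun t x => ⟨?_, ?_, ?_, ?_⟩⟩
  · exact LinearMap.congr_fun ((hτW t).comp_eq_comp hW hΔW
      ((hτW t).tensorMap (hτW t) (scalingChar_mul_scalingChar q t))) x
  · exact LinearMap.congr_fun ((hτW t).comp_eq_comp hW hΔW
      ((hσW t).tensorMap (hσW (-t)) (modularChar_mul_modularChar_neg q t))) x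
  · exact LinearMap.congr_fun ((hσW t).comp_eq_comp hW hΔW
      ((hτW t).tensorMap (hσW t) (scalingChar_mul_modularChar q t))) x
  · exact LinearMap.congr_fun ((hσW t).comp_eq_comp hW hΔW
      ((hσW t).tensorMap (hτW (-t)) (modularChar_mul_scalingChar_neg q t))) x

/-- Each `τ_t` and `σ_t` is a unital algebra automorphism of `𝒜`, the two
groups commute, and `Δ∘τ_t = (τ_t⊗τ_t)∘Δ = (σ_t⊗σ_{-t})∘Δ`,
`Δ∘σ_t = (τ_t⊗σ_t)∘Δ = (σ_t⊗τ_{-t})∘Δ`. -/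
theorem suq_scaling_modular {A : Type*} [Ring A] [Algebra ℂ A] [StarRing A] [StarModule ℂ A]
    (q : ℂ) (hq0 : 0 < ‖q‖) (hq1 : ‖q‖ < 1)
    (a g : A) (hrel : SUqRel q a g) (hbasis : SUqBasis a g)
    (μ : A ⊗[ℂ] A →ₗ[ℂ] A ⊗[ℂ] A →ₗ[ℂ] A ⊗[ℂ] A) (hμ : SUqBraidedMul q a g μ)
    (Δ : A →ₗ[ℂ] A ⊗[ℂ] A) (hΔ : SUqComul q a g μ Δ)
    (τ : ℝ → (A →ₗ[ℂ] A)) (hτ : SUqScaling q a g τ)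
    (σ : ℝ → (A →ₗ[ℂ] A)) (hσ : SUqModular q a g σ) :
    (∀ t : ℝ, τ t 1 = 1 ∧ (∀ x y : A, τ t (x * y) = τ t x * τ t y) ∧
      Function.Bijective (τ t)) ∧
    (∀ t : ℝ, σ t 1 = 1 ∧ (∀ x y : A, σ t (x * y) = σ t x * σ t y) ∧
      Function.Bijective (σ t)) ∧
    (∀ s t : ℝ, ∀ x : A, τ t (σ s x) = σ s (τ t x)) ∧
    (∀ t : ℝ, ∀ x : A,
      Δ (τ t x) = (TensorProduct.map (τ t) (τ t)) (Δ x) ∧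
      Δ (τ t x) = (TensorProduct.map (σ t) (σ (-t))) (Δ x) ∧
      Δ (σ t x) = (TensorProduct.map (τ t) (σ t)) (Δ x) ∧
      Δ (σ t x) = (TensorProduct.map (σ t) (τ (-t))) (Δ x)) :=
  suq_scaling_modular_general q hq0 a g hrel hbasis μ hμ Δ hΔ τ hτ σ hσ
end
end
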